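/- arXiv:2309.09542 — 2 statements merged into one kernel-verified Lean document; each statement's English description precedes it below -/
import Mathlib

section
/- Let P be a program with deterministic small-step semantics and S a standard security context for P. Then P and S satisfy termination-insensitive trace confidentiality if and only if the Kripke interpretation of P and S satisfies termination-insensitive confidentiality, i.e., for all agents A, all worlds w, and all temporally sound formulae φ: w ⊨ ◇↓ ∧ ◇[K^C_A]φ implies w ⊨ [K^P_A](□¬↓ ∨ ◇φ). -/
/-!
Security properties through the lens of modal logic: Kripke interpretations
of deterministic programs with a standard security context.

A program is given by its text, a domain of values for each variable, and a
deterministic small-step semantics, modelled as a partial function `step` on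
configurations (`none` meaning that the configuration admits no further step).
Worlds of the Kripke interpretation are the finite traces from valid initial
stores; by determinism such a trace is represented by its initial store
together with its length.
-/

attribute [local instance] Classical.propDecidable

namespace SecModal

/-- The usual box modality for a relation `R`: `φ` holds at all `R`-successors. -/
def box {W : Type} (R : W → W → Prop) (φ : W → Prop) (w : W) : Prop :=
  ∀ w', R w w' → φ w'

/-- The usual diamond modality for a relation `R`: `φ` holds at some `R`-successor. -/
def dia {W : Type} (R : W → W → Prop) (φ : W → Prop) (w : W) : Prop :=
  ∃ w', R w w' ∧ φ w'

/-- Temporal soundness of a formula `φ` with respect to a time relation `T`: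
at every world, `φ` holds iff `□φ` holds. -/
def TS {W : Type} (T : W → W → Prop) (φ : W → Prop) : Prop :=
  ∀ w, φ w ↔ box T φ w

/-- A store assigns a value to each variable. -/
abbrev Store (Var Val : Type) : Type := Var → Val

/-- A configuration pairs a program text with a store. -/
abbrev Config (Prog Var Val : Type) : Type := Prog × Store Var Val

/-- Restriction of a store to a set of variables `S` (`none` outside `S`). -/
noncomputable def restrict {Var Val : Type} (S : Set Var) (σ : Store Var Val) : Var → Option Val :=
  fun v => if v ∈ S then some (σ v) else none

/-- Destuttering: removal of consecutive duplicate entries of a list. -/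
noncomputable def dest {α : Type} (l : List α) : List α :=
  l.destutter (· ≠ ·)

/-- A program `⟨p, V, I⟩` with deterministic small-step semantics:
`text` is the program text `p`, `dom` assigns to each variable its domain of
values `I(v)`, and `step` is the deterministic small-step transition function. -/
structure Program (Prog Var Val : Type) : Type where
  text : Prog
  dom : Var → Set Val
  step : Config Prog Var Val → Option (Config Prog Var Val)

namespace Program

variable {Prog Var Val Agent : Type}

/-- `n`-fold iteration of the small-step semantics. -/
def iter (P : Program Prog Var Val) : ℕ → Config Prog Var Val → Option (Config Prog Var Val)
  | 0, c => some c
  | n + 1, c => (P.iter n c).bind P.step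

/-- The configuration reached after `k` steps from `c` (defaulting to `c` when undefined). -/
def configAt (P : Program Prog Var Val) (c : Config Prog Var Val) (k : ℕ) :
    Config Prog Var Val :=
  (P.iter k c).getD c

/-- The view, through the variables in `S`, of the trace of length `n` (i.e. with `n + 1`
configurations) starting at `c`: the destuttering of the list of restricted stores. -/
noncomputable def pview (P : Program Prog Var Val) (S : Set Var) (c : Config Prog Var Val)
    (n : ℕ) : List (Var → Option Val) :=
  dest ((List.range (n + 1)).map fun k => restrict S (P.configAt c k).2)

/-- The maximal trace generated from `c` halts. -/
def halts (P : Program Prog Var Val) (c : Config Prog Var Val) : Prop :=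
  ∃ n c', P.iter n c = some c' ∧ P.step c' = none

/-- The maximal trace generated from `c` diverges (is infinite). -/
def diverges (P : Program Prog Var Val) (c : Config Prog Var Val) : Prop :=
  ¬ P.halts c

/-- The (possibly infinite) views through `S` of the maximal traces generated from
`c₁` and `c₂` are equal: every view of a finite prefix of the one is a prefix of a view
of a finite prefix of the other, and vice versa. -/
def mviewEq (P : Program Prog Var Val) (S : Set Var) (c₁ c₂ : Config Prog Var Val) : Prop :=
  (∀ n, (P.iter n c₁).isSome = true →
    ∃ m, (P.iter m c₂).isSome = true ∧ P.pview S c₁ n <+: P.pview S c₂ m) ∧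
  (∀ n, (P.iter n c₂).isSome = true →
    ∃ m, (P.iter m c₁).isSome = true ∧ P.pview S c₂ n <+: P.pview S c₁ m)

/-- A valid initial store: every variable takes a value in its domain. -/
def ValidStore (P : Program Prog Var Val) (σ : Store Var Val) : Prop :=
  ∀ v, σ v ∈ P.dom v

/-- Worlds of the Kripke interpretation of `P`: the finite traces of `P`, represented
by a valid initial store together with a length for which the iterated step is defined
(the trace itself is recovered by determinism of the semantics). -/
structure World (P : Program Prog Var Val) : Type where
  init : Store Var Val
  valid : ∀ v, init v ∈ P.dom v
  len : ℕ
  defined : (P.iter len (P.text, init)).isSome = true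

/-- The store at time `k` along the trace `w`. -/
def World.store {P : Program Prog Var Val} (w : P.World) (k : ℕ) : Store Var Val :=
  (P.configAt (P.text, w.init) k).2

/-- The view of the world (finite trace) `w` through the set of variables `S`. -/
noncomputable def wview (P : Program Prog Var Val) (S : Set Var) (w : P.World) :
    List (Var → Option Val) :=
  P.pview S (P.text, w.init) w.len

/-- The time relation `T` of the Kripke interpretation: `w T w'` iff the trace `w`
is a (non-strict) prefix of the trace `w'`. -/
def Ttime (P : Program Prog Var Val) (w w' : P.World) : Prop :=
  w.init = w'.init ∧ w.len ≤ w'.len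

/-- The knowledge relation `K^C_A = K^P_A` of an agent with read set `RA`:
two worlds are related iff the agent's views of them coincide. -/
def Krel (P : Program Prog Var Val) (RA : Set Var) (w w' : P.World) : Prop :=
  P.wview RA w = P.wview RA w'

/-- The write-capability relation `W^C_A` of an agent with write set `WA`:
two worlds are related iff both are initial (length-1, i.e. 0 steps) traces and
their `fix`-projections (to the complement of `WA`) coincide. -/
def WCrel (P : Program Prog Var Val) (WA : Set Var) (w w' : P.World) : Prop :=
  w.len = 0 ∧ w'.len = 0 ∧ P.wview WAᶜ w = P.wview WAᶜ w'

/-- The write-permission relation `W^P_A` of an agent with write set `WA`: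
two worlds are related iff their `fix`-projections coincide. -/
def WPrel (P : Program Prog Var Val) (WA : Set Var) (w w' : P.World) : Prop :=
  P.wview WAᶜ w = P.wview WAᶜ w'

/-- The halting atom `↓`: the trace `w` has halted, i.e. its last configuration
admits no further step. -/
def halted (P : Program Prog Var Val) (w : P.World) : Prop :=
  P.step (P.configAt (P.text, w.init) w.len) = none

end Program

end SecModal

namespace SecModal

/-- Termination-insensitive trace confidentiality (Def. conf2): for all agents `A`
and all pairs of valid initial stores that agree on the `A`-readable variables,
either the views of the two generated maximal traces coincide, or at least one of
them does not halt. -/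
def TITraceConf {Prog Var Val Agent : Type} (P : Program Prog Var Val)
    (Rd : Agent → Set Var) : Prop :=
  ∀ (A : Agent) (σ1 σ2 : Store Var Val),
    P.ValidStore σ1 → P.ValidStore σ2 → (∀ v ∈ Rd A, σ1 v = σ2 v) →
    P.mviewEq (Rd A) (P.text, σ1) (P.text, σ2) ∨
      P.diverges (P.text, σ1) ∨ P.diverges (P.text, σ2)

end SecModal

/-!
Both directions compare the agent's view of two traces from initial stores that agree on the
readable variables. For `→`: when both maximal traces halt, trace confidentiality makes their full
views equal; the destuttered view grows by at most one entry per step, so any view of a prefix of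
the first trace is attained as the view of a prefix of the second, and temporal soundness carries
`φ` from there to the halted end of the second trace. For `←`: apply the Kripke property to the
temporally sound formula "the current view extends a fixed view of the first trace", at the
initial worlds of the two traces.
-/

namespace List

variable {α : Type} {R : α → α → Prop} [DecidableRel R]

theorem destutter'_eq_cons (l : List α) (a : α) : ∃ t, l.destutter' R a = a :: t := by
  induction l generalizing a with
  | nil => exact ⟨[], rfl⟩
  | cons b l ih =>
    rw [destutter'_cons]
    split
    · exact ⟨_, rfl⟩
    · exact ih a

theorem destutter'_prefix_destutter'_append (l t : List α) (a : α) :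
    l.destutter' R a <+: (l ++ t).destutter' R a := by
  induction l generalizing a with
  | nil =>
    obtain ⟨t', ht'⟩ := destutter'_eq_cons (R := R) t a
    exact ⟨t', by rw [nil_append, ht', destutter'_nil]; rfl⟩
  | cons b l ih =>
    rw [cons_append, destutter'_cons, destutter'_cons]
    split
    · exact (prefix_cons_inj a).2 (ih b)
    · exact ih a

theorem length_destutter'_append_singleton_le (l : List α) (a x : α) :
    ((l ++ [x]).destutter' R a).length ≤ (l.destutter' R a).length + 1 := by
  induction l generalizing a with
  | nil =>
    rw [nil_append, destutter'_singleton, destutter'_nil]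
    split <;> simp
  | cons b l ih =>
    rw [cons_append, destutter'_cons, destutter'_cons]
    split
    · simpa using ih b
    · exact ih a

theorem destutter_prefix_destutter_append (l t : List α) :
    l.destutter R <+: (l ++ t).destutter R := by
  cases l with
  | nil => exact nil_prefix
  | cons a l => exact destutter'_prefix_destutter'_append l t a

theorem length_destutter_append_singleton_le (l : List α) (x : α) :
    ((l ++ [x]).destutter R).length ≤ (l.destutter R).length + 1 := by
  cases l with
  | nil => simp
  | cons a l => exact length_destutter'_append_singleton_le l a x

/-- A discrete intermediate value property for prefix chains of lists. -/
theorem exists_le_eq_of_prefix_of_prefix {α : Type} {f : ℕ → List α}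
    (hmono : ∀ n, f n <+: f (n + 1)) (hlen : ∀ n, (f (n + 1)).length ≤ (f n).length + 1)
    {l : List α} {N : ℕ} (h0 : f 0 <+: l) (hN : l <+: f N) : ∃ k ≤ N, f k = l := by
  induction N with
  | zero => exact ⟨0, le_rfl, h0.eq_of_length (le_antisymm h0.length_le hN.length_le)⟩
  | succ N ih =>
    by_cases hl : l = f (N + 1)
    · exact ⟨N + 1, le_rfl, hl.symm⟩
    have hlt : l.length < (f (N + 1)).length :=
      lt_of_le_of_ne hN.length_le fun h => hl (hN.eq_of_length h)
    obtain ⟨k, hk, rfl⟩ :=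
      ih (prefix_of_prefix_length_le hN (hmono N) (by have := hlen N; omega))
    exact ⟨k, hk.trans N.le_succ, rfl⟩

end List

namespace SecModal

theorem box_not_iff_not_dia {W : Type} {R : W → W → Prop} {φ : W → Prop} {w : W} :
    box R (fun x => ¬ φ x) w ↔ ¬ dia R φ w := by
  simp [box, dia]

theorem restrict_eq_restrict_iff {Var Val : Type} {S : Set Var} {σ τ : Store Var Val} :
    restrict S σ = restrict S τ ↔ ∀ v ∈ S, σ v = τ v := by
  simp only [funext_iff, restrict]
  refine ⟨fun h v hv => by simpa [hv] using h v, fun h v => ?_⟩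
  split_ifs with hv
  · rw [h v hv]
  · rfl

namespace Program

variable {Prog Var Val : Type} (P : Program Prog Var Val)

def HaltsAt (c : Config Prog Var Val) (N : ℕ) : Prop :=
  ∃ c', P.iter N c = some c' ∧ P.step c' = none

variable {P}

theorem iter_add (m n : ℕ) (c : Config Prog Var Val) :
    P.iter (m + n) c = (P.iter m c).bind (P.iter n) := by
  induction n with
  | zero => cases P.iter m c <;> rfl
  | succ n ih =>
    rw [← Nat.add_assoc, iter, ih]
    cases P.iter m c <;> rfl

theorem iter_isSome_of_le {m n : ℕ} {c : Config Prog Var Val} (h : m ≤ n)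
    (hn : (P.iter n c).isSome = true) : (P.iter m c).isSome = true := by
  obtain ⟨k, rfl⟩ := Nat.exists_eq_add_of_le h
  rw [iter_add] at hn
  cases hm : P.iter m c
  · simp [hm] at hn
  · rfl

theorem HaltsAt.isSome {c : Config Prog Var Val} {N : ℕ} (h : P.HaltsAt c N) :
    (P.iter N c).isSome = true := by
  obtain ⟨c', hc', -⟩ := h
  simp [hc']

theorem HaltsAt.le_of_isSome {c : Config Prog Var Val} {N m : ℕ} (h : P.HaltsAt c N)
    (hm : (P.iter m c).isSome = true) : m ≤ N := by
  obtain ⟨c', hc', hstep⟩ := h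
  by_contra! hlt
  have hnone : P.iter (N + 1) c = none := by simp [iter, hc', hstep]
  have := iter_isSome_of_le hlt hm
  simp [hnone] at this

theorem halted_iff (w : P.World) : P.halted w ↔ P.HaltsAt (P.text, w.init) w.len := by
  obtain ⟨c', hc'⟩ := Option.isSome_iff_exists.mp w.defined
  simp [halted, HaltsAt, configAt, hc']

theorem dia_halted_iff (w : P.World) : dia P.Ttime P.halted w ↔ P.halts (P.text, w.init) := by
  constructor
  · rintro ⟨w', ⟨hinit, -⟩, hw'⟩
    rw [hinit]
    exact ⟨w'.len, (halted_iff w').1 hw'⟩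
  · rintro ⟨N, hN : P.HaltsAt _ N⟩
    exact ⟨⟨w.init, w.valid, N, hN.isSome⟩, ⟨rfl, hN.le_of_isSome w.defined⟩, (halted_iff _).2 hN⟩

theorem pview_zero (S : Set Var) (c : Config Prog Var Val) :
    P.pview S c 0 = [restrict S c.2] := rfl

theorem pview_prefix_pview_of_le (S : Set Var) (c : Config Prog Var Val) {n m : ℕ}
    (h : n ≤ m) : P.pview S c n <+: P.pview S c m := by
  obtain ⟨k, rfl⟩ := Nat.exists_eq_add_of_le h
  rw [pview, pview, dest, dest, Nat.add_right_comm, List.range_add (n := n + 1), List.map_append]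
  exact List.destutter_prefix_destutter_append _ _

theorem length_pview_succ_le (S : Set Var) (c : Config Prog Var Val) (n : ℕ) :
    (P.pview S c (n + 1)).length ≤ (P.pview S c n).length + 1 := by
  rw [pview, pview, dest, dest, List.range_succ, List.map_append]
  exact List.length_destutter_append_singleton_le _ _

theorem wview_prefix_wview_of_Ttime (S : Set Var) {w w' : P.World} (h : P.Ttime w w') :
    P.wview S w <+: P.wview S w' := by
  rw [wview, wview, h.1]
  exact P.pview_prefix_pview_of_le S _ h.2

theorem restrict_eq_of_pview_eq {S : Set Var} {c c' : Config Prog Var Val} {n m : ℕ}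
    (h : P.pview S c n = P.pview S c' m) : restrict S c.2 = restrict S c'.2 := by
  have h₀ := P.pview_prefix_pview_of_le S c (Nat.zero_le n)
  have h₀' := P.pview_prefix_pview_of_le S c' (Nat.zero_le m)
  rw [h, pview_zero] at h₀
  rw [pview_zero] at h₀'
  simpa using List.prefix_of_prefix_length_le h₀ h₀' le_rfl

theorem exists_le_pview_eq {S : Set Var} {c : Config Prog Var Val} {l : List (Var → Option Val)}
    {N : ℕ} (h0 : P.pview S c 0 <+: l) (hN : l <+: P.pview S c N) :
    ∃ k ≤ N, P.pview S c k = l :=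
  List.exists_le_eq_of_prefix_of_prefix (fun n => P.pview_prefix_pview_of_le S c n.le_succ)
    (P.length_pview_succ_le S c) h0 hN

theorem mviewEq.pview_eq_of_haltsAt {S : Set Var} {c₁ c₂ : Config Prog Var Val} {N₁ N₂ : ℕ}
    (h : P.mviewEq S c₁ c₂) (h₁ : P.HaltsAt c₁ N₁) (h₂ : P.HaltsAt c₂ N₂) :
    P.pview S c₁ N₁ = P.pview S c₂ N₂ := by
  obtain ⟨m₂, hm₂, h₁₂⟩ := h.1 N₁ h₁.isSome
  obtain ⟨m₁, hm₁, h₂₁⟩ := h.2 N₂ h₂.isSome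
  have h₁₂' := h₁₂.trans (P.pview_prefix_pview_of_le S c₂ (h₂.le_of_isSome hm₂))
  have h₂₁' := h₂₁.trans (P.pview_prefix_pview_of_le S c₁ (h₁.le_of_isSome hm₁))
  exact h₁₂'.eq_of_length_le h₂₁'.length_le

end Program

/-- Termination-insensitive confidentiality of the Kripke interpretation of `P` and `Rd`. -/
def KripkeTIConf {Prog Var Val Agent : Type} (P : Program Prog Var Val)
    (Rd : Agent → Set Var) : Prop :=
  ∀ (A : Agent) (w : P.World) (φ : P.World → Prop), TS P.Ttime φ →
    (dia P.Ttime P.halted w ∧ dia P.Ttime (box (P.Krel (Rd A)) φ) w) →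
    box (P.Krel (Rd A))
      (fun u => box P.Ttime (fun x => ¬ P.halted x) u ∨ dia P.Ttime φ u) w

section

variable {Prog Var Val Agent : Type} {P : Program Prog Var Val} {Rd : Agent → Set Var}

theorem kripkeTIConf_of_tiTraceConf (h : TITraceConf P Rd) : KripkeTIConf P Rd := by
  intro A w φ hφ ⟨hw, w', ⟨hinit, _⟩, hw'⟩ u hwu
  rw [or_iff_not_imp_left, box_not_iff_not_dia, not_not]
  intro hu
  obtain ⟨N₁, hN₁ : P.HaltsAt _ N₁⟩ := (P.dia_halted_iff w).1 hw
  obtain ⟨N₂, hN₂ : P.HaltsAt _ N₂⟩ := (P.dia_halted_iff u).1 hu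
  have hres : restrict (Rd A) w.init = restrict (Rd A) u.init :=
    Program.restrict_eq_of_pview_eq hwu
  have hview : P.pview (Rd A) (P.text, w.init) N₁ = P.pview (Rd A) (P.text, u.init) N₂ := by
    rcases h A w.init u.init w.valid u.valid (restrict_eq_restrict_iff.1 hres) with
      hmv | hdiv | hdiv
    · exact hmv.pview_eq_of_haltsAt hN₁ hN₂
    · exact absurd ⟨N₁, hN₁⟩ hdiv
    · exact absurd ⟨N₂, hN₂⟩ hdiv
  have hw'def : (P.iter w'.len (P.text, w.init)).isSome = true := hinit ▸ w'.defined
  have hw'view : P.wview (Rd A) w' = P.pview (Rd A) (P.text, w.init) w'.len := by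
    rw [Program.wview, hinit]
  have hstart : P.pview (Rd A) (P.text, u.init) 0 <+: P.wview (Rd A) w' := by
    have := P.pview_prefix_pview_of_le (Rd A) (P.text, w.init) (Nat.zero_le w'.len)
    rwa [Program.pview_zero, hres, ← hw'view] at this
  obtain ⟨k, hk, hkview⟩ := Program.exists_le_pview_eq hstart
    (by rw [hw'view, ← hview]; exact P.pview_prefix_pview_of_le _ _ (hN₁.le_of_isSome hw'def))
  have hφk : φ ⟨u.init, u.valid, k, P.iter_isSome_of_le hk hN₂.isSome⟩ := hw' _ hkview.symm
  exact ⟨⟨u.init, u.valid, N₂, hN₂.isSome⟩, ⟨rfl, hN₂.le_of_isSome u.defined⟩,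
    (hφ _).1 hφk _ ⟨rfl, hk⟩⟩

theorem exists_pview_prefix_of_kripkeTIConf (h : KripkeTIConf P Rd) (A : Agent)
    {σ τ : Store Var Val} (hσ : P.ValidStore σ) (hτ : P.ValidStore τ)
    (hστ : restrict (Rd A) σ = restrict (Rd A) τ)
    (hσh : P.halts (P.text, σ)) (hτh : P.halts (P.text, τ))
    {n : ℕ} (hn : (P.iter n (P.text, σ)).isSome = true) :
    ∃ m, (P.iter m (P.text, τ)).isSome = true ∧
      P.pview (Rd A) (P.text, σ) n <+: P.pview (Rd A) (P.text, τ) m := by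
  let φ : P.World → Prop := fun x => P.pview (Rd A) (P.text, σ) n <+: P.wview (Rd A) x
  have hφ : TS P.Ttime φ := fun x =>
    ⟨fun hx x' hxx' => hx.trans (P.wview_prefix_wview_of_Ttime _ hxx'),
      fun hx => hx x ⟨rfl, le_rfl⟩⟩
  let w₀ : P.World := ⟨σ, hσ, 0, rfl⟩
  let u₀ : P.World := ⟨τ, hτ, 0, rfl⟩
  have hwu : P.Krel (Rd A) w₀ u₀ := by
    show P.pview (Rd A) (P.text, σ) 0 = P.pview (Rd A) (P.text, τ) 0
    rw [Program.pview_zero, Program.pview_zero, hστ]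
  have hknow : dia P.Ttime (box (P.Krel (Rd A)) φ) w₀ :=
    ⟨⟨σ, hσ, n, hn⟩, ⟨rfl, Nat.zero_le n⟩, fun x hx => ⟨[], (List.append_nil _).trans hx⟩⟩
  rcases h A w₀ φ hφ ⟨(P.dia_halted_iff w₀).2 hσh, hknow⟩ u₀ hwu with
    hdiv | ⟨u, ⟨hinit : τ = u.init, -⟩, hu⟩
  · exact absurd ((P.dia_halted_iff u₀).2 hτh) (box_not_iff_not_dia.1 hdiv)
  · rw [hinit]
    exact ⟨u.len, u.defined, hu⟩

theorem tiTraceConf_of_kripkeTIConf (h : KripkeTIConf P Rd) : TITraceConf P Rd := by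
  intro A σ τ hσ hτ hστ
  by_cases hσh : P.halts (P.text, σ)
  · by_cases hτh : P.halts (P.text, τ)
    · have hres := restrict_eq_restrict_iff.2 hστ
      exact .inl ⟨fun _ => exists_pview_prefix_of_kripkeTIConf h A hσ hτ hres hσh hτh,
        fun _ => exists_pview_prefix_of_kripkeTIConf h A hτ hσ hres.symm hτh hσh⟩
    · exact .inr (.inr hτh)
  · exact .inr (.inl hσh)

end

/-- `P` and `S` satisfy termination-insensitive trace confidentiality
iff the Kripke interpretation of `P` and `S` satisfies termination-insensitive
confidentiality: for all agents `A`, worlds `w`, and temporally sound `φ`,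
`w ⊨ ◇↓ ∧ ◇[K^C_A]φ` implies `w ⊨ [K^P_A](□¬↓ ∨ ◇φ)`. -/
theorem stmt_4 {Prog Var Val Agent : Type} (P : Program Prog Var Val)
    (Rd : Agent → Set Var) :
    TITraceConf P Rd ↔
      (∀ (A : Agent) (w : P.World) (φ : P.World → Prop), TS P.Ttime φ →
        (dia P.Ttime P.halted w ∧ dia P.Ttime (box (P.Krel (Rd A)) φ) w) →
        box (P.Krel (Rd A))
          (fun u => box P.Ttime (fun x => ¬ P.halted x) u ∨ dia P.Ttime φ u) w) :=
  ⟨kripkeTIConf_of_tiTraceConf, tiTraceConf_of_kripkeTIConf⟩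

end SecModal
end

section
/- Let P = ⟨p, V, I⟩ be a program that signals termination and S an s.s.c. given by ⟨W, R⟩ with W(A) ⊆ R(A) for all agents A, and suppose every maximal trace of P is finite (all runs terminate). Then P and S satisfy trace-based robust declassification if and only if the Kripke interpretation of P and S satisfies robust declassification: for all worlds w, agents A, and write-stable temporally sound formulae φ, if w ⊨ ⟨W^C_A⟩(◇[K_A]φ ∧ ¬[K_A]◇φ) then w ⊨ ◇[K_A]φ ∧ ¬[K_A]◇φ. -/
/-!
Security properties through the lens of modal logic: Kripke interpretations
of deterministic programs with a standard security context.

A program is given by its text, a domain of values for each variable, and a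
deterministic small-step semantics, modelled as a partial function `step` on
configurations (`none` meaning that the configuration admits no further step).
Worlds of the Kripke interpretation are the finite traces from valid initial
stores; by determinism such a trace is represented by its initial store
together with its length.
-/

attribute [local instance] Classical.propDecidable

namespace SecModal

/-- Trace-based robust declassification (Def. rd2). -/
def TraceRD {Prog Var Val Agent : Type} (P : Program Prog Var Val)
    (Rd Wr : Agent → Set Var) : Prop :=
  ∀ (A : Agent) (σ11 σ21 σ12 σ22 : Store Var Val),
    P.ValidStore σ11 → P.ValidStore σ21 → P.ValidStore σ12 → P.ValidStore σ22 →
    (∀ v ∈ Rd A ∪ Wr A, σ11 v = σ21 v) →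
    (∀ v ∈ Rd A ∪ Wr A, σ12 v = σ22 v) →
    (∀ v, v ∉ Wr A → σ11 v = σ12 v) →
    (∀ v, v ∉ Wr A → σ21 v = σ22 v) →
    ((P.mviewEq (Rd A) (P.text, σ11) (P.text, σ21) ↔
        P.mviewEq (Rd A) (P.text, σ12) (P.text, σ22)) ∨
      P.diverges (P.text, σ11) ∨ P.diverges (P.text, σ21) ∨
      P.diverges (P.text, σ12) ∨ P.diverges (P.text, σ22))

/-- A formula `φ` is write-stable for an agent with write-capability relation
`W^C_A`: `w ⊨ ◇φ` implies `w ⊨ [W^C_A]◇φ`. -/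
def WStable {Prog Var Val : Type} (P : Program Prog Var Val) (WA : Set Var)
    (φ : P.World → Prop) : Prop :=
  ∀ w, dia P.Ttime φ w → box (P.WCrel WA) (dia P.Ttime φ) w

/-- `P` signals termination. -/
def SignalsTermination {Prog Var Val Agent : Type} (P : Program Prog Var Val)
    (Rd : Agent → Set Var) : Prop :=
  ∀ (A : Agent) (w : P.World), P.halted w → box (P.Krel (Rd A)) P.halted w

section DestAux

open List

variable {α : Type} (R : α → α → Prop) [DecidableRel R]

theorem destutter'_head (a : α) (l : List α) : ∃ t, l.destutter' R a = a :: t := by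
  induction l generalizing a with
  | nil => exact ⟨[], rfl⟩
  | cons b l ih =>
    by_cases h : R a b
    · exact ⟨l.destutter' R b, destutter'_cons_pos _ h⟩
    · obtain ⟨t, ht⟩ := ih a
      exact ⟨t, by rw [destutter'_cons_neg _ h, ht]⟩

theorem destutter'_prefix (a : α) (l t : List α) :
    l.destutter' R a <+: (l ++ t).destutter' R a := by
  induction l generalizing a with
  | nil =>
    obtain ⟨u, hu⟩ := destutter'_head R a t
    simp only [nil_append, destutter'_nil, hu]
    exact ⟨u, rfl⟩
  | cons b l ih =>
    by_cases h : R a b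
    · rw [cons_append, destutter'_cons_pos _ h, destutter'_cons_pos _ h]
      exact (List.prefix_cons_inj a).mpr (ih b)
    · rw [cons_append, destutter'_cons_neg _ h, destutter'_cons_neg _ h]
      exact ih a

theorem destutter'_snoc (a x : α) (l : List α) :
    (l ++ [x]).destutter' R a = l.destutter' R a ∨
    (l ++ [x]).destutter' R a = l.destutter' R a ++ [x] := by
  induction l generalizing a with
  | nil =>
    by_cases h : R a x <;> simp [destutter'_singleton, h]
  | cons b l ih =>
    by_cases h : R a b
    · rw [cons_append, destutter'_cons_pos _ h, destutter'_cons_pos _ h]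
      rcases ih b with h' | h'
      · exact Or.inl (by rw [h'])
      · exact Or.inr (by rw [h', cons_append])
    · rw [cons_append, destutter'_cons_neg _ h, destutter'_cons_neg _ h]
      exact ih a

end DestAux

section DestNe

open List

variable {α : Type}

theorem dest_cons_head (a : α) (l : List α) : ∃ t, dest (a :: l) = a :: t := by
  rw [dest, destutter_cons']; exact destutter'_head _ a l

theorem dest_prefix (a : α) (l t : List α) :
    dest (a :: l) <+: dest ((a :: l) ++ t) := by
  rw [dest, dest, cons_append, destutter_cons', destutter_cons']
  exact destutter'_prefix _ a l t

theorem dest_snoc (a x : α) (l : List α) :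
    dest ((a :: l) ++ [x]) = dest (a :: l) ∨
    dest ((a :: l) ++ [x]) = dest (a :: l) ++ [x] := by
  rw [dest, dest, cons_append, destutter_cons', destutter_cons']
  exact destutter'_snoc _ a x l

theorem dest_prefix' {l₁ l₂ : List α} (h : l₁ <+: l₂) (hne : l₁ ≠ []) :
    dest l₁ <+: dest l₂ := by
  obtain ⟨t, rfl⟩ := h
  cases l₁ with
  | nil => simp at hne
  | cons a l => exact dest_prefix a l t

theorem dest_snoc' {l : List α} (hne : l ≠ []) (x : α) :
    dest (l ++ [x]) = dest l ∨ dest (l ++ [x]) = dest l ++ [x] := by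
  cases l with
  | nil => simp at hne
  | cons a l => exact dest_snoc a x l

theorem dest_singleton (a : α) : dest [a] = [a] := by
  rw [dest, destutter_singleton]

end DestNe

theorem nat_ivt (f : ℕ → ℕ) (h0 : f 0 = 1) (hs : ∀ n, f (n + 1) ≤ f n + 1) :
    ∀ N k, 1 ≤ k → k ≤ f N → ∃ m, m ≤ N ∧ f m = k := by
  intro N
  induction N with
  | zero => intro k h1 h2; exact ⟨0, le_refl _, by omega⟩
  | succ N ih =>
    intro k h1 h2
    by_cases h : k ≤ f N
    · obtain ⟨m, hm, he⟩ := ih k h1 h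
      exact ⟨m, hm.trans (Nat.le_succ N), he⟩
    · exact ⟨N + 1, le_refl _, by have := hs N; omega⟩


section ProgAux

open List

variable {Prog Var Val : Type} (P : Program Prog Var Val)

theorem iter_succ' (n : ℕ) (c : Config Prog Var Val) :
    P.iter (n + 1) c = (P.iter n c).bind P.step := rfl

theorem iter_none_mono {n m : ℕ} {c : Config Prog Var Val} (hnm : n ≤ m)
    (h : P.iter n c = none) : P.iter m c = none := by
  induction m, hnm using Nat.le_induction with
  | base => exact h
  | succ m hm ih => rw [iter_succ', ih]; rfl

theorem iter_isSome_mono {n m : ℕ} {c : Config Prog Var Val} (hnm : n ≤ m)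
    (h : (P.iter m c).isSome = true) : (P.iter n c).isSome = true := by
  cases hn : P.iter n c with
  | none => rw [iter_none_mono P hnm hn] at h; simp at h
  | some c' => rfl

noncomputable def Nmax (c : Config Prog Var Val) : ℕ :=
  if h : P.halts c then Nat.find h else 0

theorem Nmax_spec {c : Config Prog Var Val} (hc : P.halts c) :
    ∃ c', P.iter (Nmax P c) c = some c' ∧ P.step c' = none := by
  rw [Nmax, dif_pos hc]; exact Nat.find_spec hc

theorem iter_Nmax_isSome {c : Config Prog Var Val} (hc : P.halts c) :
    (P.iter (Nmax P c) c).isSome = true := by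
  obtain ⟨c', h1, _⟩ := Nmax_spec P hc; rw [h1]; rfl

theorem iter_isSome_iff {c : Config Prog Var Val} (hc : P.halts c) (n : ℕ) :
    (P.iter n c).isSome = true ↔ n ≤ Nmax P c := by
  constructor
  · intro h
    by_contra hn
    obtain ⟨c', h1, h2⟩ := Nmax_spec P hc
    have hnone : P.iter (Nmax P c + 1) c = none := by rw [iter_succ', h1]; exact h2
    have := iter_none_mono P (by omega : Nmax P c + 1 ≤ n) hnone
    rw [this] at h; simp at h
  · intro hn; exact iter_isSome_mono P hn (iter_Nmax_isSome P hc)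

theorem configAt_eq {c : Config Prog Var Val} {n : ℕ} {c' : Config Prog Var Val}
    (h : P.iter n c = some c') : P.configAt c n = c' := by
  rw [Program.configAt, h]; rfl

theorem Nmax_unique {c : Config Prog Var Val} {n : ℕ} (hc : P.halts c)
    (hs : (P.iter n c).isSome = true) (h2 : P.step (P.configAt c n) = none) :
    n = Nmax P c := by
  have hn := (iter_isSome_iff P hc n).1 hs
  rcases Nat.lt_or_ge n (Nmax P c) with h | h
  · exfalso
    obtain ⟨c', hc'⟩ := Option.isSome_iff_exists.1 hs
    have hnone : P.iter (n + 1) c = none := by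
      rw [iter_succ', hc']
      rw [configAt_eq P hc'] at h2; exact h2
    have h3 := (iter_isSome_iff P hc (n + 1)).2 (by omega)
    rw [hnone] at h3; simp at h3
  · omega

theorem restrict_eq_iff {S : Set Var} {σ τ : Store Var Val} :
    restrict S σ = restrict S τ ↔ ∀ v ∈ S, σ v = τ v := by
  constructor
  · intro h v hv
    have := congrFun h v
    simpa [restrict, hv] using this
  · intro h
    funext v
    by_cases hv : v ∈ S <;> simp [restrict, hv]
    exact h v hv

theorem configAt_zero (c : Config Prog Var Val) : P.configAt c 0 = c := rfl

theorem pview_zero (S : Set Var) (c : Config Prog Var Val) :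
    P.pview S c 0 = [restrict S c.2] := by
  rw [Program.pview, show (0:ℕ) + 1 = 1 from rfl, List.range_succ, List.range_zero,
    List.nil_append, List.map_singleton, dest_singleton, configAt_zero]

theorem pview_cons (S : Set Var) (c : Config Prog Var Val) (n : ℕ) :
    ∃ t, P.pview S c n = restrict S c.2 :: t := by
  rw [Program.pview]
  have hdec : (range (n + 1)).map (fun k => restrict S (P.configAt c k).2) =
      restrict S c.2 ::
        ((range n).map (fun k => restrict S (P.configAt c (k + 1)).2)) := by
    rw [range_succ_eq_map]
    simp [List.map_map, Function.comp_def, Nat.succ_eq_add_one, configAt_zero]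
  rw [hdec]
  exact dest_cons_head _ _

theorem pview_ne_nil (S : Set Var) (c : Config Prog Var Val) (n : ℕ) :
    P.pview S c n ≠ [] := by
  obtain ⟨t, ht⟩ := pview_cons P S c n
  simp [ht]

theorem pview_prefix (S : Set Var) (c : Config Prog Var Val) {n m : ℕ} (h : n ≤ m) :
    P.pview S c n <+: P.pview S c m := by
  have h1 : range (n + 1) <+: range (m + 1) := by
    have := List.take_prefix (n + 1) (range (m + 1))
    rwa [List.take_range, min_eq_left (by omega)] at this
  exact dest_prefix' (h1.map _) (by simp)

theorem pview_succ (S : Set Var) (c : Config Prog Var Val) (n : ℕ) :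
    P.pview S c (n + 1) = P.pview S c n ∨
    ∃ x, P.pview S c (n + 1) = P.pview S c n ++ [x] := by
  rw [Program.pview, Program.pview, show n + 1 + 1 = (n + 1) + 1 from rfl,
    range_succ, map_append]
  rcases dest_snoc' (l := (range (n + 1)).map fun k => restrict S (P.configAt c k).2)
      (by simp) (restrict S (P.configAt c (n + 1)).2) with h | h
  · left; simpa using h
  · right; exact ⟨_, by simpa using h⟩

theorem pview_length_zero (S : Set Var) (c : Config Prog Var Val) :
    (P.pview S c 0).length = 1 := by rw [pview_zero]; rfl

theorem pview_length_succ_le (S : Set Var) (c : Config Prog Var Val) (n : ℕ) :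
    (P.pview S c (n + 1)).length ≤ (P.pview S c n).length + 1 := by
  rcases pview_succ P S c n with h | ⟨x, h⟩ <;> simp [h]

theorem pview_intermediate (S : Set Var) (c : Config Prog Var Val) (N : ℕ)
    {L : List (Var → Option Val)} (hL : L <+: P.pview S c N) (hne : L ≠ []) :
    ∃ m, m ≤ N ∧ P.pview S c m = L := by
  obtain ⟨m, hm, he⟩ := nat_ivt (fun k => (P.pview S c k).length)
    (pview_length_zero P S c) (pview_length_succ_le P S c) N L.length
    (by cases L with | nil => simp at hne | cons a t => simp
    ) hL.length_le
  refine ⟨m, hm, ?_⟩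
  have h1 := pview_prefix P S c hm
  rcases prefix_or_prefix_of_prefix h1 hL with hp | hp
  · exact hp.eq_of_length (by rw [he])
  · exact (hp.eq_of_length (by rw [he])).symm

theorem mviewEq_iff {S : Set Var} {c₁ c₂ : Config Prog Var Val}
    (h1 : P.halts c₁) (h2 : P.halts c₂) :
    P.mviewEq S c₁ c₂ ↔ P.pview S c₁ (Nmax P c₁) = P.pview S c₂ (Nmax P c₂) := by
  constructor
  · rintro ⟨ha, hb⟩
    obtain ⟨m, hm, hp⟩ := ha (Nmax P c₁) (iter_Nmax_isSome P h1)
    obtain ⟨m', hm', hp'⟩ := hb (Nmax P c₂) (iter_Nmax_isSome P h2)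
    have q1 : P.pview S c₁ (Nmax P c₁) <+: P.pview S c₂ (Nmax P c₂) :=
      hp.trans (pview_prefix P S c₂ ((iter_isSome_iff P h2 m).1 hm))
    have q2 : P.pview S c₂ (Nmax P c₂) <+: P.pview S c₁ (Nmax P c₁) :=
      hp'.trans (pview_prefix P S c₁ ((iter_isSome_iff P h1 m').1 hm'))
    exact q1.sublist.antisymm q2.sublist
  · intro h
    constructor
    · intro n hn
      exact ⟨Nmax P c₂, iter_Nmax_isSome P h2,
        h ▸ pview_prefix P S c₁ ((iter_isSome_iff P h1 n).1 hn)⟩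
    · intro n hn
      exact ⟨Nmax P c₁, iter_Nmax_isSome P h1,
        h ▸ pview_prefix P S c₂ ((iter_isSome_iff P h2 n).1 hn)⟩

theorem World.ext' {w w' : P.World} (h1 : w.init = w'.init) (h2 : w.len = w'.len) :
    w = w' := by
  cases w; cases w'
  cases h1; cases h2; rfl

/-- The full view of the maximal trace from store `σ`. -/
noncomputable def fullView (S : Set Var) (σ : Store Var Val) : List (Var → Option Val) :=
  P.pview S (P.text, σ) (Nmax P (P.text, σ))

theorem fullView_head_eq {S : Set Var} {σ τ : Store Var Val} {n m : ℕ}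
    (h : P.pview S (P.text, σ) n = P.pview S (P.text, τ) m) :
    ∀ v ∈ S, σ v = τ v := by
  obtain ⟨t1, e1⟩ := pview_cons P S (P.text, σ) n
  obtain ⟨t2, e2⟩ := pview_cons P S (P.text, τ) m
  rw [e1, e2] at h
  exact restrict_eq_iff.1 (List.head_eq_of_cons_eq h)

end ProgAux

section ModalAux

open List

variable {Prog Var Val Agent : Type} (P : Program Prog Var Val)
/-- The final (halted) world of the maximal trace from a valid store. -/
noncomputable def finW (hterm : ∀ σ : Store Var Val, P.ValidStore σ → P.halts (P.text, σ)) {σ : Store Var Val} (hσ : P.ValidStore σ) : P.World :=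
  ⟨σ, hσ, Nmax P (P.text, σ), iter_Nmax_isSome P (hterm σ hσ)⟩

/-- The initial (length-one) world at a valid store. -/
def iniW {σ : Store Var Val} (hσ : P.ValidStore σ) : P.World :=
  ⟨σ, hσ, 0, rfl⟩

theorem finW_congr (hterm : ∀ σ : Store Var Val, P.ValidStore σ → P.halts (P.text, σ)) {φ : P.World → Prop} {σ τ : Store Var Val}
    (hσ : P.ValidStore σ) (hτ : P.ValidStore τ) (h : σ = τ) :
    φ (finW P hterm hσ) ↔ φ (finW P hterm hτ) := by subst h; rfl

theorem world_len_le (hterm : ∀ σ : Store Var Val, P.ValidStore σ → P.halts (P.text, σ)) (w : P.World) : w.len ≤ Nmax P (P.text, w.init) :=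
  (iter_isSome_iff P (hterm _ w.valid) _).1 w.defined

theorem persist {φ : P.World → Prop} (ts : TS P.Ttime φ) {w w' : P.World}
    (h : φ w) (hi : w.init = w'.init) (hl : w.len ≤ w'.len) : φ w' :=
  (ts w).1 h w' ⟨hi, hl⟩

theorem persist_fin (hterm : ∀ σ : Store Var Val, P.ValidStore σ → P.halts (P.text, σ)) {φ : P.World → Prop} (ts : TS P.Ttime φ) {w : P.World}
    (h : φ w) : φ (finW P hterm w.valid) :=
  persist P ts h rfl (world_len_le P hterm w)

theorem halted_iff (hterm : ∀ σ : Store Var Val, P.ValidStore σ → P.halts (P.text, σ)) (w : P.World) :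
    P.halted w ↔ w.len = Nmax P (P.text, w.init) := by
  constructor
  · intro h; exact Nmax_unique P (hterm _ w.valid) w.defined h
  · intro h
    obtain ⟨c', h1, h2⟩ := Nmax_spec P (hterm _ w.valid)
    rw [Program.halted, h, configAt_eq P h1]; exact h2

theorem wview_zero {S : Set Var} {w : P.World} (h : w.len = 0) :
    P.wview S w = [restrict S w.init] := by
  rw [Program.wview, h, pview_zero]

variable (Rd : Agent → Set Var)

theorem full_view_len (hterm : ∀ σ : Store Var Val, P.ValidStore σ → P.halts (P.text, σ)) (hsig : SignalsTermination P Rd) (A : Agent)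
    {σ : Store Var Val} (hσ : P.ValidStore σ) {u : P.World}
    (h : fullView P (Rd A) σ = P.wview (Rd A) u) :
    u.len = Nmax P (P.text, u.init) := by
  have h1 : P.halted (finW P hterm hσ) := (halted_iff P hterm _).2 rfl
  have h2 := hsig A (finW P hterm hσ) h1 u h
  exact (halted_iff P hterm u).1 h2

theorem boxK_dia_iff (hterm : ∀ σ : Store Var Val, P.ValidStore σ → P.halts (P.text, σ)) (A : Agent) {φ : P.World → Prop} (ts : TS P.Ttime φ)
    {w : P.World} (hw : w.len = 0) :
    box (P.Krel (Rd A)) (dia P.Ttime φ) w ↔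
      ∀ τ (hτ : P.ValidStore τ), (∀ v ∈ Rd A, τ v = w.init v) →
        φ (finW P hterm hτ) := by
  constructor
  · intro h τ hτ hag
    have hK : P.Krel (Rd A) w (iniW P hτ) := by
      show P.wview _ w = P.wview _ (iniW P hτ)
      rw [wview_zero P hw, wview_zero P (show (iniW P hτ).len = 0 from rfl)]
      exact congrArg (fun x => [x])
        (restrict_eq_iff.2 (fun v hv => (hag v hv).symm))
    obtain ⟨w', ⟨hi, hl⟩, hφ⟩ := h (iniW P hτ) hK
    exact (finW_congr P hterm w'.valid hτ hi.symm).1 (persist_fin P hterm ts hφ)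
  · intro h u hK
    have hu : restrict (Rd A) u.init = restrict (Rd A) w.init := by
      obtain ⟨t, ht⟩ := pview_cons P (Rd A) (P.text, u.init) u.len
      have hK' : P.wview (Rd A) w = P.wview (Rd A) u := hK
      have h2 : P.wview (Rd A) u = restrict (Rd A) u.init :: t := ht
      rw [wview_zero P hw, h2] at hK'
      exact (List.head_eq_of_cons_eq hK').symm
    have hφ := h u.init u.valid (restrict_eq_iff.1 hu)
    exact ⟨finW P hterm u.valid, ⟨rfl, world_len_le P hterm u⟩, hφ⟩

theorem dia_boxK_iff (hterm : ∀ σ : Store Var Val, P.ValidStore σ → P.halts (P.text, σ)) (hsig : SignalsTermination P Rd) (A : Agent)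
    {φ : P.World → Prop} (ts : TS P.Ttime φ) {w : P.World} :
    dia P.Ttime (box (P.Krel (Rd A)) φ) w ↔
      ∀ τ (hτ : P.ValidStore τ),
        fullView P (Rd A) τ = fullView P (Rd A) w.init →
        φ (finW P hterm hτ) := by
  constructor
  · rintro ⟨w', ⟨hi, hl⟩, hb⟩ τ hτ hsim
    have hpre : P.pview (Rd A) (P.text, w'.init) w'.len <+: fullView P (Rd A) τ := by
      have h1 : P.pview (Rd A) (P.text, w'.init) w'.len <+: fullView P (Rd A) w'.init :=
        pview_prefix P _ _ (world_len_le P hterm w')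
      rwa [show fullView P (Rd A) w'.init = fullView P (Rd A) τ from by
        rw [← hi, ← hsim]] at h1
    obtain ⟨m, hm, he⟩ := pview_intermediate P _ _ _ hpre (pview_ne_nil P _ _ _)
    have hK : P.Krel (Rd A) w' ⟨τ, hτ, m, (iter_isSome_iff P (hterm τ hτ) m).2 hm⟩ :=
      he.symm
    have hφ := hb _ hK
    exact (finW_congr P hterm _ hτ rfl).1 (persist_fin P hterm ts hφ)
  · intro h
    refine ⟨finW P hterm w.valid, ⟨rfl, world_len_le P hterm w⟩, ?_⟩
    intro u hK
    have hlen : u.len = Nmax P (P.text, u.init) :=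
      full_view_len P Rd hterm hsig A w.valid hK
    have hsim : fullView P (Rd A) u.init = fullView P (Rd A) w.init := by
      show P.pview (Rd A) (P.text, u.init) (Nmax P (P.text, u.init)) =
        fullView P (Rd A) w.init
      rw [← hlen]
      exact (hK : P.wview (Rd A) (finW P hterm w.valid) = P.wview (Rd A) u).symm
    have hφ := h u.init u.valid hsim
    have he : u = finW P hterm u.valid := World.ext' P rfl hlen
    rw [he]; exact hφ

theorem WCrel_iff {WA : Set Var} {w u : P.World} :
    P.WCrel WA w u ↔
      (w.len = 0 ∧ u.len = 0 ∧ ∀ v, v ∉ WA → w.init v = u.init v) := by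
  constructor
  · rintro ⟨h1, h2, h3⟩
    refine ⟨h1, h2, ?_⟩
    rw [wview_zero P h1, wview_zero P h2] at h3
    intro v hv
    exact restrict_eq_iff.1 (by simpa using h3) v (by simp [hv])
  · rintro ⟨h1, h2, h3⟩
    refine ⟨h1, h2, ?_⟩
    rw [wview_zero P h1, wview_zero P h2,
      restrict_eq_iff.2 (fun v hv => h3 v (by simpa using hv))]

theorem F_invariant (hterm : ∀ σ : Store Var Val, P.ValidStore σ → P.halts (P.text, σ)) {WA : Set Var} {φ : P.World → Prop} (ts : TS P.Ttime φ)
    (wst : WStable P WA φ) {σ τ : Store Var Val}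
    (hσ : P.ValidStore σ) (hτ : P.ValidStore τ)
    (hag : ∀ v, v ∉ WA → σ v = τ v) (hF : φ (finW P hterm hσ)) :
    φ (finW P hterm hτ) := by
  have hdia : dia P.Ttime φ (iniW P hσ) :=
    ⟨finW P hterm hσ, ⟨rfl, Nat.zero_le _⟩, hF⟩
  obtain ⟨w', ⟨hi, _⟩, hφ⟩ :=
    wst (iniW P hσ) hdia (iniW P hτ) ((WCrel_iff P).2 ⟨rfl, rfl, hag⟩)
  exact (finW_congr P hterm w'.valid hτ hi.symm).1 (persist_fin P hterm ts hφ)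

end ModalAux

/-- If `P` signals termination, `W(A) ⊆ R(A)` for all agents `A`, and
every maximal trace of `P` is finite (all runs terminate), then `P` and `S` satisfy
trace-based robust declassification iff the Kripke interpretation of `P` and `S`
satisfies robust declassification: for all worlds `w`, agents `A`, and write-stable
temporally sound `φ`, if `w ⊨ ⟨W^C_A⟩(◇[K_A]φ ∧ ¬[K_A]◇φ)` then
`w ⊨ ◇[K_A]φ ∧ ¬[K_A]◇φ`. -/
theorem stmt_8 {Prog Var Val Agent : Type} (P : Program Prog Var Val)
    (Rd Wr : Agent → Set Var)
    (hsig : SignalsTermination P Rd) (hWR : ∀ A : Agent, Wr A ⊆ Rd A)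
    (hterm : ∀ σ : Store Var Val, P.ValidStore σ → P.halts (P.text, σ)) :
    TraceRD P Rd Wr ↔
      (∀ (w : P.World) (A : Agent) (φ : P.World → Prop),
        TS P.Ttime φ → WStable P (Wr A) φ →
        dia (P.WCrel (Wr A))
          (fun u =>
            dia P.Ttime (box (P.Krel (Rd A)) φ) u ∧
            ¬ box (P.Krel (Rd A)) (dia P.Ttime φ) u) w →
        (dia P.Ttime (box (P.Krel (Rd A)) φ) w ∧
          ¬ box (P.Krel (Rd A)) (dia P.Ttime φ) w)) := by
  constructor
  · -- trace-based RD implies Kripke RD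
    intro htr w A φ ts wst hdia
    obtain ⟨u, hWC, hG, hH⟩ := hdia
    obtain ⟨hw0, hu0, hag⟩ := (WCrel_iff P).1 hWC
    have hGτ := (dia_boxK_iff P Rd hterm hsig A ts).1 hG
    constructor
    · rw [dia_boxK_iff P Rd hterm hsig A ts]
      intro ρ hρ hsim
      have hRd : ∀ v ∈ Rd A, ρ v = w.init v := fullView_head_eq P hsim
      have hρ' : P.ValidStore (fun v => if v ∈ Wr A then u.init v else ρ v) := by
        intro v
        by_cases hv : v ∈ Wr A
        · simp only [if_pos hv]; exact u.valid v
        · simp only [if_neg hv]; exact hρ v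
      have key := htr A w.init ρ u.init
        (fun v => if v ∈ Wr A then u.init v else ρ v) w.valid hρ u.valid hρ'
        (fun v hv => by
          have hvR : v ∈ Rd A := by
            rcases hv with hv | hv
            · exact hv
            · exact hWR A hv
          exact (hRd v hvR).symm)
        (fun v hv => by
          by_cases hw : v ∈ Wr A
          · exact (if_pos hw).symm
          · have hvR : v ∈ Rd A := by
              rcases hv with hv | hv
              · exact hv
              · exact absurd hv hw
            simp only [if_neg hw]
            rw [← hag v hw, ← hRd v hvR])
        hag
        (fun v hv => (if_neg hv).symm)
      rcases key with hiff | hd | hd | hd | hd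
      · have h1 : P.mviewEq (Rd A) (P.text, w.init) (P.text, ρ) :=
          (mviewEq_iff P (hterm _ w.valid) (hterm _ hρ)).2 hsim.symm
        have h3 : fullView P (Rd A)
            (fun v => if v ∈ Wr A then u.init v else ρ v) = fullView P (Rd A) u.init :=
          ((mviewEq_iff P (hterm _ u.valid) (hterm _ hρ')).1 (hiff.1 h1)).symm
        have hφρ' := hGτ _ hρ' h3
        exact F_invariant P hterm ts wst hρ' hρ (fun v hv => if_neg hv) hφρ'
      · exact absurd (hterm _ w.valid) hd
      · exact absurd (hterm _ hρ) hd
      · exact absurd (hterm _ u.valid) hd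
      · exact absurd (hterm _ hρ') hd
    · intro hbox
      have hHw := (boxK_dia_iff P Rd hterm A ts hw0).1 hbox
      apply hH
      rw [boxK_dia_iff P Rd hterm A ts hu0]
      intro ρ hρ hagRd
      have hρ' : P.ValidStore (fun v => if v ∈ Wr A then w.init v else ρ v) := by
        intro v
        by_cases hv : v ∈ Wr A
        · simp only [if_pos hv]; exact w.valid v
        · simp only [if_neg hv]; exact hρ v
      have hρ'Rd : ∀ v ∈ Rd A,
          (fun v => if v ∈ Wr A then w.init v else ρ v) v = w.init v := by
        intro v hv
        by_cases hw : v ∈ Wr A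
        · exact if_pos hw
        · simp only [if_neg hw]
          rw [hagRd v hv, ← hag v hw]
      have hφ := hHw _ hρ' hρ'Rd
      exact F_invariant P hterm ts wst hρ' hρ (fun v hv => if_neg hv) hφ
  · -- Kripke RD implies trace-based RD
    intro hk A σ11 σ21 σ12 σ22 h11 h21 h12 h22 e1 e2 f1 f2
    left
    have key : ∀ (τ11 τ21 τ12 τ22 : Store Var Val)
        (g11 : P.ValidStore τ11) (g21 : P.ValidStore τ21)
        (g12 : P.ValidStore τ12) (g22 : P.ValidStore τ22),
        (∀ v ∈ Rd A ∪ Wr A, τ11 v = τ21 v) →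
        (∀ v ∈ Rd A ∪ Wr A, τ12 v = τ22 v) →
        (∀ v, v ∉ Wr A → τ11 v = τ12 v) →
        (∀ v, v ∉ Wr A → τ21 v = τ22 v) →
        fullView P (Rd A) τ11 = fullView P (Rd A) τ21 →
        fullView P (Rd A) τ12 = fullView P (Rd A) τ22 := by
      intro τ11 τ21 τ12 τ22 g11 g21 g12 g22 d1 d2 d3 d4 hsim
      by_contra hne
      set φ : P.World → Prop := fun v =>
        ¬ ∃ ρ', P.ValidStore ρ' ∧ (∀ x, x ∉ Wr A → ρ' x = v.init x) ∧
          fullView P (Rd A) ρ' = fullView P (Rd A) τ22 with hφdef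
      have ts : TS P.Ttime φ := by
        intro w
        constructor
        · rintro hφw w' ⟨hi, -⟩
          simp only [hφdef] at hφw ⊢
          rw [← hi]
          exact hφw
        · intro hb; exact hb w ⟨rfl, le_refl _⟩
      have wst : WStable P (Wr A) φ := by
        intro w hdw v hWC
        obtain ⟨-, -, hagwv⟩ := (WCrel_iff P).1 hWC
        obtain ⟨w', ⟨hi, -⟩, hφw'⟩ := hdw
        refine ⟨v, ⟨rfl, le_refl _⟩, ?_⟩
        simp only [hφdef] at hφw' ⊢
        rintro ⟨ρ', hv', hagr, hsim'⟩
        exact hφw' ⟨ρ', hv', fun x hx => by rw [hagr x hx, ← hagwv x hx, hi], hsim'⟩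
      have happ := hk (iniW P g11) A φ ts wst ?_
      · obtain ⟨hG11, -⟩ := happ
        have hGτ := (dia_boxK_iff P Rd hterm hsig A ts).1 hG11
        have hφ21 := hGτ τ21 g21 hsim.symm
        simp only [hφdef] at hφ21
        exact hφ21 ⟨τ22, g22, fun x hx => (d4 x hx).symm, rfl⟩
      · refine ⟨iniW P g12, (WCrel_iff P).2 ⟨rfl, rfl, fun v hv => d3 v hv⟩, ?_, ?_⟩
        · rw [dia_boxK_iff P Rd hterm hsig A ts]
          intro ρ hρ hsimρ
          simp only [hφdef]
          rintro ⟨ρ', hv', hagr, hsim'⟩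
          apply hne
          have hρRd : ∀ v ∈ Rd A, ρ v = τ12 v := fullView_head_eq P hsimρ
          have hρ'Rd : ∀ v ∈ Rd A, ρ' v = τ22 v := fullView_head_eq P hsim'
          have heq : ρ' = ρ := funext fun x => by
            by_cases hx : x ∈ Wr A
            · rw [hρ'Rd x (hWR A hx), hρRd x (hWR A hx),
                ← d2 x (Set.mem_union_right _ hx)]
            · exact hagr x hx
          calc fullView P (Rd A) τ12 = fullView P (Rd A) ρ := hsimρ.symm
            _ = fullView P (Rd A) ρ' := by rw [heq]
            _ = fullView P (Rd A) τ22 := hsim'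
        · intro hb
          have h' := (boxK_dia_iff P Rd hterm A ts
            (show (iniW P g12).len = 0 from rfl)).1 hb
          have hφ22 := h' τ22 g22
            (fun v hv => (d2 v (Set.mem_union_left _ hv)).symm)
          simp only [hφdef] at hφ22
          exact hφ22 ⟨τ22, g22, fun x hx => rfl, rfl⟩
    constructor
    · intro h
      exact (mviewEq_iff P (hterm _ h12) (hterm _ h22)).2
        (key σ11 σ21 σ12 σ22 h11 h21 h12 h22 e1 e2 f1 f2
          ((mviewEq_iff P (hterm _ h11) (hterm _ h21)).1 h))
    · intro h
      exact (mviewEq_iff P (hterm _ h11) (hterm _ h21)).2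
        (key σ12 σ22 σ11 σ21 h12 h22 h11 h21 e2 e1
          (fun v hv => (f1 v hv).symm) (fun v hv => (f2 v hv).symm)
          ((mviewEq_iff P (hterm _ h12) (hterm _ h22)).1 h))

end SecModal
end
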